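/- For every integer K ≥ 1 and every H ∈ ℕ, the value function s ↦ V H s is a convex function on Fin K → ℝ (ConvexOn ℝ over the whole space). -/
import Mathlib

open scoped BigOperators

noncomputable section

def simplex (K : ℕ) : Set (Fin K → ℝ) :=
  {q | (∀ k, 0 ≤ q k) ∧ ∑ k, q k = 1}

def simplexInt (K : ℕ) : Set (Fin K → ℝ) :=
  {r | (∀ k, 0 < r k) ∧ ∑ k, r k = 1}

noncomputable def V (K : ℕ) : ℕ → (Fin K → ℝ) → ℝ
  | 0, s => ⨆ k, s k
  | H + 1, s =>
      sInf ((fun r : Fin K → ℝ =>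
        sSup ((fun q : Fin K → ℝ => V K H (fun k => s k + q k / r k)) '' simplex K))
        '' simplexInt K)

namespace ValueAux

/-- The inner sup function. -/
noncomputable def F (K H : ℕ) (s r : Fin K → ℝ) : ℝ :=
  sSup ((fun q : Fin K → ℝ => V K H (fun k => s k + q k / r k)) '' simplex K)

lemma V_succ (K H : ℕ) (s : Fin K → ℝ) :
    V K (H + 1) s = sInf ((fun r => F K H s r) '' simplexInt K) := rfl

lemma unif_mem_int {K : ℕ} (hK : 1 ≤ K) :
    (fun _ : Fin K => (K : ℝ)⁻¹) ∈ simplexInt K := by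
  have hK0 : (0 : ℝ) < K := by exact_mod_cast hK
  refine ⟨fun k => by positivity, ?_⟩
  simp [Finset.sum_const, Finset.card_univ, mul_comm]
  field_simp

lemma int_subset {K : ℕ} : simplexInt K ⊆ simplex K :=
  fun r hr => ⟨fun k => (hr.1 k).le, hr.2⟩

lemma unif_mem {K : ℕ} (hK : 1 ≤ K) :
    (fun _ : Fin K => (K : ℝ)⁻¹) ∈ simplex K := int_subset (unif_mem_int hK)

lemma comb_pos {a b x y : ℝ} (ha : 0 ≤ a) (hb : 0 ≤ b) (hab : a + b = 1)
    (hx : 0 < x) (hy : 0 < y) : 0 < a * x + b * y := by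
  rcases ha.eq_or_lt with h | h
  · have hb1 : b = 1 := by linarith
    simp [← h, hb1, hy]
  · exact add_pos_of_pos_of_nonneg (mul_pos h hx) (mul_nonneg hb hy.le)

lemma one_div_comb {a b x y : ℝ} (ha : 0 ≤ a) (hb : 0 ≤ b) (hab : a + b = 1)
    (hx : 0 < x) (hy : 0 < y) : 1 / (a * x + b * y) ≤ a / x + b / y := by
  have hpos := comb_pos ha hb hab hx hy
  rw [div_add_div _ _ (ne_of_gt hx) (ne_of_gt hy), div_le_div_iff₀ hpos (mul_pos hx hy)]
  have h2 : (a * y + x * b) * (a * x + b * y)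
      = a * b * (x - y) ^ 2 + (a + b) ^ 2 * (x * y) := by ring
  rw [hab, one_pow] at h2
  nlinarith [mul_nonneg (mul_nonneg ha hb) (sq_nonneg (x - y)), h2]

lemma comb_mem_int {K : ℕ} {a b : ℝ} {r₁ r₂ : Fin K → ℝ}
    (hr₁ : r₁ ∈ simplexInt K) (hr₂ : r₂ ∈ simplexInt K)
    (ha : 0 ≤ a) (hb : 0 ≤ b) (hab : a + b = 1) :
    a • r₁ + b • r₂ ∈ simplexInt K := by
  refine ⟨fun k => comb_pos ha hb hab (hr₁.1 k) (hr₂.1 k), ?_⟩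
  simp only [Pi.add_apply, Pi.smul_apply, smul_eq_mul]
  rw [Finset.sum_add_distrib, ← Finset.mul_sum, ← Finset.mul_sum, hr₁.2, hr₂.2]
  linarith

lemma inner_nonempty {K : ℕ} (hK : 1 ≤ K) (H : ℕ) (s r : Fin K → ℝ) :
    ((fun q : Fin K → ℝ => V K H (fun k => s k + q k / r k)) '' simplex K).Nonempty :=
  ⟨_, Set.mem_image_of_mem _ (unif_mem hK)⟩

/-- Decomposition of the shifted point as a convex combination of vertices. -/
lemma point_eq_sum {K : ℕ} (s r q : Fin K → ℝ) (hq : q ∈ simplex K) :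
    (fun k => s k + q k / r k) =
      ∑ j : Fin K, q j • (fun k => s k + (if k = j then 1 else 0) / r k) := by
  funext k
  simp only [Finset.sum_apply, Pi.smul_apply, smul_eq_mul, mul_add]
  rw [Finset.sum_add_distrib, ← Finset.sum_mul, hq.2, one_mul]
  congr 1
  have : ∀ j : Fin K, q j * ((if k = j then (1:ℝ) else 0) / r k)
      = if k = j then q j / r k else 0 := by
    intro j; split <;> simp_all [div_eq_mul_inv]
  rw [Finset.sum_congr rfl fun j _ => this j]
  simp [Finset.sum_ite_eq]

lemma bddAbove_inner {K : ℕ} (hK : 1 ≤ K) {H : ℕ}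
    (hconv : ConvexOn ℝ Set.univ (V K H)) (s r : Fin K → ℝ) :
    BddAbove ((fun q : Fin K → ℝ => V K H (fun k => s k + q k / r k)) '' simplex K) := by
  haveI : Nonempty (Fin K) := Fin.pos_iff_nonempty.mp hK
  set c : Fin K → ℝ := fun j => V K H (fun k => s k + (if k = j then 1 else 0) / r k) with hc
  refine ⟨Finset.univ.sup' Finset.univ_nonempty c, ?_⟩
  rintro x ⟨q, hq, rfl⟩
  show V K H (fun k => s k + q k / r k) ≤ _
  rw [point_eq_sum s r q hq]
  calc V K H (∑ j : Fin K, q j • fun k => s k + (if k = j then 1 else 0) / r k)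
      ≤ ∑ j : Fin K, q j * c j :=
        hconv.map_sum_le (fun j _ => hq.1 j) hq.2 (fun j _ => Set.mem_univ _)
    _ ≤ ∑ j : Fin K, q j * Finset.univ.sup' Finset.univ_nonempty c := by
        refine Finset.sum_le_sum fun j _ => ?_
        exact mul_le_mul_of_nonneg_left (Finset.le_sup' c (Finset.mem_univ j)) (hq.1 j)
    _ = Finset.univ.sup' Finset.univ_nonempty c := by
        rw [← Finset.sum_mul, hq.2, one_mul]

lemma V_le_F {K : ℕ} (hK : 1 ≤ K) {H : ℕ}
    (hmono : Monotone (V K H)) (hconv : ConvexOn ℝ Set.univ (V K H))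
    (s : Fin K → ℝ) {r : Fin K → ℝ} (hr : r ∈ simplexInt K) :
    V K H s ≤ F K H s r := by
  have hmem := Set.mem_image_of_mem
    (fun q : Fin K → ℝ => V K H (fun k => s k + q k / r k)) (unif_mem hK)
  refine le_trans ?_ (le_csSup (bddAbove_inner hK hconv s r) hmem)
  apply hmono
  intro k
  have h1 : (0:ℝ) ≤ (K : ℝ)⁻¹ / r k := by
    have := hr.1 k
    have hK0 : (0:ℝ) ≤ (K : ℝ)⁻¹ := by positivity
    positivity
  simp only []
  linarith

lemma bddBelow_outer {K : ℕ} (hK : 1 ≤ K) {H : ℕ}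
    (hmono : Monotone (V K H)) (hconv : ConvexOn ℝ Set.univ (V K H)) (s : Fin K → ℝ) :
    BddBelow ((fun r => F K H s r) '' simplexInt K) := by
  refine ⟨V K H s, ?_⟩
  rintro x ⟨r, hr, rfl⟩
  exact V_le_F hK hmono hconv s hr

lemma outer_nonempty {K : ℕ} (hK : 1 ≤ K) (H : ℕ) (s : Fin K → ℝ) :
    ((fun r => F K H s r) '' simplexInt K).Nonempty :=
  ⟨_, Set.mem_image_of_mem _ (unif_mem_int hK)⟩

lemma F_joint {K : ℕ} (hK : 1 ≤ K) {H : ℕ}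
    (hmono : Monotone (V K H)) (hconv : ConvexOn ℝ Set.univ (V K H))
    {s₁ s₂ r₁ r₂ : Fin K → ℝ} (hr₁ : r₁ ∈ simplexInt K) (hr₂ : r₂ ∈ simplexInt K)
    {a b : ℝ} (ha : 0 ≤ a) (hb : 0 ≤ b) (hab : a + b = 1) :
    F K H (a • s₁ + b • s₂) (a • r₁ + b • r₂) ≤ a * F K H s₁ r₁ + b * F K H s₂ r₂ := by
  refine csSup_le (inner_nonempty hK H _ _) ?_
  rintro x ⟨q, hq, rfl⟩
  have step1 : V K H (fun k => (a • s₁ + b • s₂) k + q k / (a • r₁ + b • r₂) k)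
      ≤ V K H (a • (fun k => s₁ k + q k / r₁ k) + b • (fun k => s₂ k + q k / r₂ k)) := by
    apply hmono
    intro k
    simp only [Pi.add_apply, Pi.smul_apply, smul_eq_mul]
    have hdiv : q k / (a * r₁ k + b * r₂ k) ≤ a * (q k / r₁ k) + b * (q k / r₂ k) := by
      have h := one_div_comb ha hb hab (hr₁.1 k) (hr₂.1 k)
      have hqk := hq.1 k
      calc q k / (a * r₁ k + b * r₂ k) = q k * (1 / (a * r₁ k + b * r₂ k)) := by ring
        _ ≤ q k * (a / r₁ k + b / r₂ k) := mul_le_mul_of_nonneg_left h hqk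
        _ = a * (q k / r₁ k) + b * (q k / r₂ k) := by ring
    linarith
  have step2 : V K H (a • (fun k => s₁ k + q k / r₁ k) + b • (fun k => s₂ k + q k / r₂ k))
      ≤ a * V K H (fun k => s₁ k + q k / r₁ k) + b * V K H (fun k => s₂ k + q k / r₂ k) :=
    hconv.2 (Set.mem_univ _) (Set.mem_univ _) ha hb hab
  have step3 : a * V K H (fun k => s₁ k + q k / r₁ k) + b * V K H (fun k => s₂ k + q k / r₂ k)
      ≤ a * F K H s₁ r₁ + b * F K H s₂ r₂ := by
    refine add_le_add ?_ ?_
    · exact mul_le_mul_of_nonneg_left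
        (le_csSup (bddAbove_inner hK hconv s₁ r₁) (Set.mem_image_of_mem _ hq)) ha
    · exact mul_le_mul_of_nonneg_left
        (le_csSup (bddAbove_inner hK hconv s₂ r₂) (Set.mem_image_of_mem _ hq)) hb
  linarith

lemma V_mono_convex {K : ℕ} (hK : 1 ≤ K) :
    ∀ H, Monotone (V K H) ∧ ConvexOn ℝ Set.univ (V K H) := by
  haveI : Nonempty (Fin K) := Fin.pos_iff_nonempty.mp hK
  intro H
  induction H with
  | zero =>
    constructor
    · intro s t h
      exact ciSup_mono (Set.finite_range t).bddAbove h
    · refine ⟨convex_univ, ?_⟩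
      intro x _ y _ a b ha hb hab
      show (⨆ k, (a • x + b • y) k) ≤ a * (⨆ k, x k) + b * (⨆ k, y k)
      refine ciSup_le fun k => ?_
      have hx : x k ≤ ⨆ k, x k := le_ciSup (Set.finite_range x).bddAbove k
      have hy : y k ≤ ⨆ k, y k := le_ciSup (Set.finite_range y).bddAbove k
      simp only [Pi.add_apply, Pi.smul_apply, smul_eq_mul]
      nlinarith
  | succ H ih =>
    obtain ⟨hmono, hconv⟩ := ih
    constructor
    · -- Monotone
      intro s t hst
      rw [V_succ, V_succ]
      refine le_csInf (outer_nonempty hK H t) ?_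
      rintro x ⟨r, hr, rfl⟩
      have h1 : sInf ((fun r => F K H s r) '' simplexInt K) ≤ F K H s r :=
        csInf_le (bddBelow_outer hK hmono hconv s) (Set.mem_image_of_mem _ hr)
      refine h1.trans ?_
      refine csSup_le (inner_nonempty hK H s r) ?_
      rintro x ⟨q, hq, rfl⟩
      refine le_trans ?_ (le_csSup (bddAbove_inner hK hconv t r) (Set.mem_image_of_mem _ hq))
      apply hmono
      intro k
      have := hst k
      simp only []
      linarith
    · -- Convex
      refine ⟨convex_univ, ?_⟩
      intro s₁ _ s₂ _ a b ha hb hab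
      simp only [smul_eq_mul, V_succ]
      refine le_of_forall_pos_le_add fun ε hε => ?_
      obtain ⟨x₁, ⟨r₁, hr₁, rfl⟩, hx₁⟩ :=
        Real.lt_sInf_add_pos (outer_nonempty hK H s₁) (half_pos hε)
      obtain ⟨x₂, ⟨r₂, hr₂, rfl⟩, hx₂⟩ :=
        Real.lt_sInf_add_pos (outer_nonempty hK H s₂) (half_pos hε)
      have hmemr := comb_mem_int hr₁ hr₂ ha hb hab
      have h1 : sInf ((fun r => F K H (a • s₁ + b • s₂) r) '' simplexInt K)
          ≤ F K H (a • s₁ + b • s₂) (a • r₁ + b • r₂) :=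
        csInf_le (bddBelow_outer hK hmono hconv _) (Set.mem_image_of_mem _ hmemr)
      have h2 := F_joint (s₁ := s₁) (s₂ := s₂) hK hmono hconv hr₁ hr₂ ha hb hab
      have h3 : a * F K H s₁ r₁ ≤ a * (sInf ((fun r => F K H s₁ r) '' simplexInt K) + ε / 2) :=
        mul_le_mul_of_nonneg_left hx₁.le ha
      have h4 : b * F K H s₂ r₂ ≤ b * (sInf ((fun r => F K H s₂ r) '' simplexInt K) + ε / 2) :=
        mul_le_mul_of_nonneg_left hx₂.le hb
      nlinarith [h1, h2, h3, h4]

end ValueAux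

/-- The value function is convex on the whole state space. -/
theorem value_convex (K : ℕ) (hK : 1 ≤ K) (H : ℕ) :
    ConvexOn ℝ Set.univ (V K H) := by
  exact (ValueAux.V_mono_convex hK H).2
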